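/- Let S be a finite abelian semigroup with an absorbing element 0_S and let g be a Lie algebra. Then the quotient of the S-expanded Lie algebra S ⊗ g by the ideal 0_S ⊗ g is a Lie algebra, and 0_S ⊗ g is indeed a Lie ideal of S ⊗ g. -/

import Mathlib

/-!
The bracket on `S →₀ g` is bi-additive, so alternation and the Jacobi identity reduce to
monomials `λα ⊗ x`, where they follow from commutativity and associativity of `S` together
with the corresponding identities in `g`. Because `0_S` is absorbing, bracketing with
`0_S ⊗ y` on either side lands in `0_S ⊗ g`; this makes `0_S ⊗ g` an ideal, and
bi-additivity then shows that the bracket is well defined modulo it.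
-/

/-- The bracket of the `S`-expanded Lie algebra `S ⊗ g`, modelled on `S →₀ g`:
`[λα ⊗ x, λβ ⊗ y] = (λα λβ) ⊗ [x, y]`, extended bilinearly. -/
noncomputable def expBracket {S : Type*} [Mul S] {L : Type*} [LieRing L]
    (f g : S →₀ L) : S →₀ L :=
  f.sum fun a x => g.sum fun b y => Finsupp.single (a * b) ⁅x, y⁆

open Finsupp

section Mul

variable {S : Type*} [Mul S] {L : Type*} [LieRing L]

@[simp]
lemma expBracket_zero_left (g : S →₀ L) : expBracket 0 g = 0 := by
  simp [expBracket]

@[simp]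
lemma expBracket_zero_right (f : S →₀ L) : expBracket f 0 = 0 := by
  simp [expBracket]

lemma expBracket_add_left (f f' g : S →₀ L) :
    expBracket (f + f') g = expBracket f g + expBracket f' g :=
  sum_add_index' (fun _ => by simp) fun _ _ _ => by
    simp only [add_lie, single_add, sum_add]

lemma expBracket_add_right (f g g' : S →₀ L) :
    expBracket f (g + g') = expBracket f g + expBracket f g' := by
  simp only [expBracket, ← sum_add]
  refine sum_congr fun _ _ => sum_add_index' (fun _ => by simp) fun _ _ _ => ?_
  simp only [lie_add, single_add]

lemma expBracket_sub_left (f f' g : S →₀ L) :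
    expBracket (f - f') g = expBracket f g - expBracket f' g :=
  map_sub (AddMonoidHom.mk' (expBracket · g) fun f f' => expBracket_add_left f f' g) f f'

lemma expBracket_sub_right (f g g' : S →₀ L) :
    expBracket f (g - g') = expBracket f g - expBracket f g' :=
  map_sub (AddMonoidHom.mk' (expBracket f) (expBracket_add_right f)) g g'

@[simp]
lemma expBracket_single_single (a b : S) (x y : L) :
    expBracket (single a x) (single b y) = single (a * b) ⁅x, y⁆ := by
  simp [expBracket]

lemma expBracket_single_left_of_mul_eq {z : S} (hz : ∀ a, z * a = z) (y : L) (f : S →₀ L) :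
    expBracket (single z y) f = single z (f.sum fun _ x => ⁅y, x⁆) := by
  unfold expBracket
  rw [sum_single_index (by simp), single_sum]
  simp only [hz]

lemma expBracket_single_right_of_mul_eq {z : S} (hz : ∀ a, a * z = z) (f : S →₀ L) (y : L) :
    expBracket f (single z y) = single z (f.sum fun _ x => ⁅x, y⁆) := by
  unfold expBracket
  rw [single_sum]
  exact sum_congr fun a _ => by rw [sum_single_index (by simp), hz]

end Mul

section CommSemigroup

variable {S : Type*} [CommSemigroup S] {L : Type*} [LieRing L]

lemma expBracket_add_expBracket_swap (f g : S →₀ L) :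
    expBracket f g + expBracket g f = 0 := by
  induction f using Finsupp.induction_linear with
  | zero => simp
  | add f f' hf hf' =>
    rw [expBracket_add_left, expBracket_add_right, add_add_add_comm, hf, hf', add_zero]
  | single a x =>
    induction g using Finsupp.induction_linear with
    | zero => simp
    | add g g' hg hg' =>
      rw [expBracket_add_right, expBracket_add_left, add_add_add_comm, hg, hg', add_zero]
    | single b y => rw [expBracket_single_single, expBracket_single_single, mul_comm b a,
        ← single_add, ← lie_skew x y, neg_add_cancel, single_zero]

lemma expBracket_self (f : S →₀ L) : expBracket f f = 0 := by
  induction f using Finsupp.induction_linear with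
  | zero => simp
  | add f f' hf hf' =>
    rw [expBracket_add_left, expBracket_add_right, expBracket_add_right, hf, hf', zero_add,
      add_zero, expBracket_add_expBracket_swap]
  | single a x => simp

noncomputable def expJacobiator (f g h : S →₀ L) : S →₀ L :=
  expBracket f (expBracket g h) + expBracket g (expBracket h f) + expBracket h (expBracket f g)

lemma expJacobiator_rotate (f g h : S →₀ L) : expJacobiator f g h = expJacobiator g h f := by
  simp only [expJacobiator]
  abel

lemma expJacobiator_add_left (f f' g h : S →₀ L) :
    expJacobiator (f + f') g h = expJacobiator f g h + expJacobiator f' g h := by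
  simp only [expJacobiator, expBracket_add_left, expBracket_add_right]
  abel

lemma expJacobiator_single (a b c : S) (x y w : L) :
    expJacobiator (single a x) (single b y) (single c w) = 0 := by
  have hbca : b * (c * a) = a * (b * c) := by ac_rfl
  have hcab : c * (a * b) = a * (b * c) := by ac_rfl
  simp only [expJacobiator, expBracket_single_single, hbca, hcab, ← single_add, lie_jacobi,
    single_zero]

lemma expJacobiator_eq_zero_of_single_left {g h : S →₀ L}
    (hsingle : ∀ a x, expJacobiator (single a x) g h = 0) (f : S →₀ L) :
    expJacobiator f g h = 0 := by
  induction f using Finsupp.induction_linear with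
  | zero => simp [expJacobiator]
  | add f f' hf hf' => rw [expJacobiator_add_left, hf, hf', add_zero]
  | single a x => exact hsingle a x

/-- Rotating the arguments lets additivity in the first slot reduce all three to monomials. -/
lemma expJacobiator_eq_zero (f g h : S →₀ L) : expJacobiator f g h = 0 := by
  refine expJacobiator_eq_zero_of_single_left (fun a x => ?_) f
  rw [expJacobiator_rotate]
  refine expJacobiator_eq_zero_of_single_left (fun b y => ?_) g
  rw [expJacobiator_rotate]
  refine expJacobiator_eq_zero_of_single_left (fun c w => ?_) h
  exact expJacobiator_single c a b w x y

end CommSemigroup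

/-- If `0_S` is an absorbing element of the abelian semigroup `S`, then `0_S ⊗ g` is a
Lie ideal of the `S`-expanded Lie algebra `S ⊗ g`, and the bracket descends to the
quotient `(S ⊗ g)/(0_S ⊗ g)`, where it is well defined, alternating and satisfies the
Jacobi identity; hence the quotient is a Lie algebra. -/
theorem zero_reduction_ideal_and_quotient
    {S : Type*} [CommSemigroup S] {L : Type*} [LieRing L]
    (z : S) (hz : ∀ a : S, z * a = z) :
    let I : Set (S →₀ L) := {f | ∃ x : L, f = Finsupp.single z x}
    -- `0_S ⊗ g` is a Lie ideal:
    (∀ f : S →₀ L, ∀ g ∈ I, expBracket f g ∈ I ∧ expBracket g f ∈ I) ∧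
    -- the bracket is well defined on the quotient by `I`:
    (∀ f₁ f₂ g₁ g₂ : S →₀ L, f₁ - f₂ ∈ I → g₁ - g₂ ∈ I →
      expBracket f₁ g₁ - expBracket f₂ g₂ ∈ I) ∧
    -- and the quotient bracket is alternating and satisfies the Jacobi identity:
    (∀ f : S →₀ L, expBracket f f ∈ I) ∧
    (∀ f g h : S →₀ L,
      expBracket f (expBracket g h) + expBracket g (expBracket h f) +
        expBracket h (expBracket f g) ∈ I) := by
  intro I
  have hz' (a : S) : a * z = z := mul_comm a z ▸ hz a
  have mem_of_eq_zero {f : S →₀ L} (hf : f = 0) : f ∈ I := ⟨0, by rw [hf, single_zero]⟩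
  refine ⟨?_, ?_, fun f => mem_of_eq_zero (expBracket_self f),
    fun f g h => mem_of_eq_zero (expJacobiator_eq_zero f g h)⟩
  · rintro f _ ⟨y, rfl⟩
    exact ⟨⟨_, expBracket_single_right_of_mul_eq hz' f y⟩,
      ⟨_, expBracket_single_left_of_mul_eq hz y f⟩⟩
  · rintro f₁ f₂ g₁ g₂ ⟨u, hu⟩ ⟨v, hv⟩
    have hsplit : expBracket f₁ g₁ - expBracket f₂ g₂ =
        expBracket (f₁ - f₂) g₁ + expBracket f₂ (g₁ - g₂) := by
      rw [expBracket_sub_left, expBracket_sub_right]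
      abel
    rw [hsplit, hu, hv, expBracket_single_left_of_mul_eq hz,
      expBracket_single_right_of_mul_eq hz', ← single_add]
    exact ⟨_, rfl⟩
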